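/- arXiv:2308.11763 — 5 statements merged into one kernel-verified Lean document; each statement's English description precedes it below -/
import Mathlib

section
/- Let α be a d-face of the clique complex of a graph G, with d ≥ 1. Then the set N_α of d-faces that are neighbours of α equals the disjoint union over γ ∈ ∂(α) of the sets {γ ∪ {x} : x ∈ π_γ, x ∉ α}. In particular the sets indexed by distinct boundary faces γ are pairwise disjoint. -/
open Finset

variable {V : Type*} [Fintype V] [DecidableEq V]

/-- Common neighborhood of a finite vertex set: vertices adjacent to every element of `S`. -/
def pi (G : SimpleGraph V) (S : Finset V) : Set V := {v | ∀ x ∈ S, G.Adj x v}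

/-- A `d`-face of the clique complex: a `(d+1)`-element vertex set inducing a complete subgraph. -/
def IsFace (G : SimpleGraph V) (d : ℕ) (α : Finset V) : Prop :=
  α.card = d + 1 ∧ G.IsClique (α : Set V)

/-- `α'` is a neighbour of the `d`-face `α`: a distinct `d`-face sharing a common
`(d-1)`-face (a `d`-element clique contained in both). -/
def Nbr (G : SimpleGraph V) (d : ℕ) (α α' : Finset V) : Prop :=
  IsFace G d α' ∧ α' ≠ α ∧
    ∃ γ : Finset V, γ.card = d ∧ G.IsClique (γ : Set V) ∧ γ ⊆ α ∧ γ ⊆ α'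

/-- Transverse neighbour: a neighbour such that some `(d+1)`-face contains both. -/
def Transv (G : SimpleGraph V) (d : ℕ) (α α' : Finset V) : Prop :=
  Nbr G d α α' ∧ ∃ β : Finset V, IsFace G (d + 1) β ∧ α ⊆ β ∧ α' ⊆ β

/-- Parallel neighbour: a neighbour such that no `(d+1)`-face contains both. -/
def Parl (G : SimpleGraph V) (d : ℕ) (α α' : Finset V) : Prop :=
  Nbr G d α α' ∧ ¬ ∃ β : Finset V, IsFace G (d + 1) β ∧ α ⊆ β ∧ α' ⊆ β

/-- The set of neighbours of `α`. -/
def Nset (G : SimpleGraph V) (d : ℕ) (α : Finset V) : Set (Finset V) := {α' | Nbr G d α α'}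

/-- The set of transverse neighbours of `α`. -/
def Tset (G : SimpleGraph V) (d : ℕ) (α : Finset V) : Set (Finset V) := {α' | Transv G d α α'}

/-- The set of parallel neighbours of `α`. -/
def Pset (G : SimpleGraph V) (d : ℕ) (α : Finset V) : Set (Finset V) := {α' | Parl G d α α'}

/-- The set of `(d+1)`-faces containing the `d`-face `α`. -/
def Hset (G : SimpleGraph V) (d : ℕ) (α : Finset V) : Set (Finset V) :=
  {β | IsFace G (d + 1) β ∧ α ⊆ β}

/-- Forman–Ricci curvature of a `d`-face. -/
noncomputable def FRC (G : SimpleGraph V) (d : ℕ) (α : Finset V) : ℤ :=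
  (Hset G d α).ncard + (d + 1) - (Pset G d α).ncard

theorem stmt4 (G : SimpleGraph V) (d : ℕ) (hd : 1 ≤ d) (α : Finset V)
    (hα : IsFace G d α) :
    (Nset G d α =
      ⋃ γ ∈ (α.powersetCard d : Finset (Finset V)),
        {α' : Finset V | ∃ x, x ∈ pi G γ ∧ x ∉ α ∧ α' = insert x γ}) ∧
    Set.PairwiseDisjoint (↑(α.powersetCard d) : Set (Finset V))
      (fun γ => ({α' : Finset V | ∃ x, x ∈ pi G γ ∧ x ∉ α ∧ α' = insert x γ} :
        Set (Finset V))) := by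
  constructor
  · ext α'
    simp only [Nset, Set.mem_setOf_eq, Set.mem_iUnion, Finset.mem_coe,
      Finset.mem_powersetCard, exists_prop]
    constructor
    · rintro ⟨⟨hcard, hclique⟩, hne, γ, hγc, hγcl, hγα, hγα'⟩
      refine ⟨γ, ⟨hγα, hγc⟩, ?_⟩
      have hss : γ ⊂ α' := hγα'.ssubset_of_ne
        (by intro h; rw [h] at hγc; omega)
      obtain ⟨x, hxα', hxγ⟩ := Finset.exists_of_ssubset hss
      have hins : insert x γ = α' := by
        apply Finset.eq_of_subset_of_card_le
        · exact Finset.insert_subset hxα' hγα'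
        · rw [Finset.card_insert_of_notMem hxγ, hγc, hcard]
      have hxpi : x ∈ pi G γ := by
        intro y hy
        exact hclique (hγα' hy) hxα' (fun h => hxγ (h ▸ hy))
      have hxα : x ∉ α := by
        intro hxα
        apply hne
        apply Finset.eq_of_subset_of_card_le
        · rw [← hins]; exact Finset.insert_subset hxα hγα
        · rw [hα.1, hcard]
      exact ⟨x, hxpi, hxα, hins.symm⟩
    · rintro ⟨γ, ⟨hγα, hγc⟩, x, hxpi, hxα, rfl⟩
      have hxγ : x ∉ γ := fun h => hxα (hγα h)
      have hγcl : G.IsClique (γ : Set V) := hα.2.subset (by exact_mod_cast hγα)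
      have hcl : G.IsClique ((insert x γ : Finset V) : Set V) := by
        rw [Finset.coe_insert]
        exact hγcl.insert (fun y hy _ => ((hxpi y hy).symm))
      refine ⟨⟨by rw [Finset.card_insert_of_notMem hxγ, hγc], hcl⟩, ?_, γ, hγc, hγcl,
        hγα, Finset.subset_insert _ _⟩
      intro h
      exact hxα (h ▸ Finset.mem_insert_self x γ)
  · intro γ hγ γ' hγ' hne
    simp only [Finset.mem_coe, Finset.mem_powersetCard] at hγ hγ'
    rw [Function.onFun, Set.disjoint_left]
    rintro α' ⟨x, hxpi, hxα, rfl⟩ ⟨x', hxpi', hxα', heq⟩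
    have hxγ : x ∉ γ := fun h => hxα (hγ.1 h)
    have hxγ' : x' ∉ γ' := fun h => hxα' (hγ'.1 h)
    have hxx : x' = x := by
      have : x' ∈ insert x γ := heq ▸ Finset.mem_insert_self x' γ'
      rcases Finset.mem_insert.1 this with h | h
      · exact h
      · exact absurd (hγ.1 h) hxα'
    subst hxx
    apply hne
    rw [← Finset.erase_insert hxγ, ← Finset.erase_insert hxγ', heq]
end

section
/- Let α be a d-face of the clique complex of a graph G. The set P_α of parallel neighbours of α equals the disjoint union over γ ∈ ∂(α) of the sets {γ ∪ {x} : x ∈ π_γ, x ∉ π_α, x ∉ α}. -/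
open Finset

variable {V : Type*} [Fintype V] [DecidableEq V]

theorem stmt7 (G : SimpleGraph V) (d : ℕ) (α : Finset V) (hα : IsFace G d α) :
    (Pset G d α =
      ⋃ γ ∈ (α.powersetCard d : Finset (Finset V)),
        {α' : Finset V | ∃ x, x ∈ pi G γ ∧ x ∉ pi G α ∧ x ∉ α ∧ α' = insert x γ}) ∧
    Set.PairwiseDisjoint (↑(α.powersetCard d) : Set (Finset V))
      (fun γ => ({α' : Finset V | ∃ x, x ∈ pi G γ ∧ x ∉ pi G α ∧ x ∉ α ∧ α' = insert x γ} :
        Set (Finset V))) := by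
  obtain ⟨hαc, hαclq⟩ := hα
  constructor
  · ext α'
    simp only [Pset, Parl, Nbr, IsFace, Set.mem_setOf_eq, Set.mem_iUnion,
      Finset.mem_coe, Finset.mem_powersetCard]
    constructor
    · rintro ⟨⟨⟨hc', hclq'⟩, hne, γ, hγc, hγclq, hγα, hγα'⟩, hnb⟩
      refine ⟨γ, ⟨hγα, hγc⟩, ?_⟩
      have hsd : (α' \ γ).card = 1 := by
        rw [Finset.card_sdiff_of_subset hγα', hc', hγc]; omega
      obtain ⟨x, hx⟩ := Finset.card_eq_one.mp hsd
      have hxm : x ∈ α' ∧ x ∉ γ := by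
        have := Finset.mem_sdiff.mp (hx ▸ Finset.mem_singleton_self x)
        exact this
      have hα'eq : α' = insert x γ := by
        apply Finset.eq_of_subset_of_card_le
        · intro a ha
          by_cases hag : a ∈ γ
          · exact Finset.mem_insert_of_mem hag
          · have : a ∈ α' \ γ := Finset.mem_sdiff.mpr ⟨ha, hag⟩
            rw [hx, Finset.mem_singleton] at this
            exact this ▸ Finset.mem_insert_self x γ
        · rw [Finset.card_insert_of_notMem hxm.2, hγc, hc']
      have hxpi : x ∈ pi G γ := by
        intro a ha
        exact hclq' (hγα' ha) hxm.1 (fun h => hxm.2 (h ▸ ha))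
      have hxα : x ∉ α := by
        intro hxmem
        apply hne
        apply Finset.eq_of_subset_of_card_le
        · rw [hα'eq]
          exact Finset.insert_subset hxmem hγα
        · rw [hc', hαc]
      refine ⟨x, hxpi, ?_, hxα, hα'eq⟩
      intro hxpiα
      apply hnb
      refine ⟨insert x α, ⟨?_, ?_⟩, Finset.subset_insert x α, ?_⟩
      · rw [Finset.card_insert_of_notMem hxα, hαc]
      · rw [Finset.coe_insert]
        exact hαclq.insert (fun b hb _ => (hxpiα b hb).symm)
      · rw [hα'eq]
        exact Finset.insert_subset_insert x hγα
    · rintro ⟨γ, ⟨hγα, hγc⟩, x, hxpi, hxpiα, hxα, rfl⟩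
      have hxγ : x ∉ γ := fun h => hxα (hγα h)
      have hclq' : G.IsClique ((insert x γ : Finset V) : Set V) := by
        rw [Finset.coe_insert]
        exact (hαclq.subset (by exact_mod_cast hγα)).insert
          (fun b hb _ => (hxpi b hb).symm)
      have hc' : (insert x γ).card = d + 1 := by
        rw [Finset.card_insert_of_notMem hxγ, hγc]
      have hne : insert x γ ≠ α := fun h => hxα (h ▸ Finset.mem_insert_self x γ)
      refine ⟨⟨⟨hc', hclq'⟩, hne, γ, hγc, hαclq.subset (by exact_mod_cast hγα),
        hγα, Finset.subset_insert x γ⟩, ?_⟩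
      rintro ⟨β, ⟨hβc, hβclq⟩, hαβ, hα'β⟩
      apply hxpiα
      intro a ha
      have hxβ : x ∈ β := hα'β (Finset.mem_insert_self x γ)
      exact hβclq (hαβ ha) hxβ (fun h => hxα (h ▸ ha))
  · intro γ₁ hγ₁ γ₂ hγ₂ hne
    simp only [Finset.mem_coe, Finset.mem_powersetCard] at hγ₁ hγ₂
    apply Set.disjoint_left.mpr
    rintro α' ⟨x₁, _, _, hx₁α, h1⟩ ⟨x₂, _, _, hx₂α, h2⟩
    apply hne
    have key : ∀ (γ : Finset V) (x : V), γ ⊆ α → x ∉ α → (insert x γ) ∩ α = γ := by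
      intro γ x hγα hxα
      ext a
      simp only [Finset.mem_inter, Finset.mem_insert]
      constructor
      · rintro ⟨h | h, ha⟩
        · exact absurd (h ▸ ha) hxα
        · exact h
      · exact fun h => ⟨Or.inr h, hγα h⟩
    calc γ₁ = (insert x₁ γ₁) ∩ α := (key γ₁ x₁ hγ₁.1 hx₁α).symm
      _ = (insert x₂ γ₂) ∩ α := by rw [← h1, ← h2]
      _ = γ₂ := key γ₂ x₂ hγ₂.1 hx₂α
end

section
/- Let α be a d-face (d ≥ 1) of the clique complex of a graph G, with Forman-Ricci curvature F_d(α) = |H_α| + (d+1) − |P_α|. Then F_d(α) = |π_α| + (d+1) − Σ_{γ ∈ ∂(α)} |π_γ \ (π_α ∪ α)|. -/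
open Finset

variable {V : Type*} [Fintype V] [DecidableEq V]

section aux

variable {V : Type*} [Fintype V] [DecidableEq V]

lemma pi_not_mem {G : SimpleGraph V} {S : Finset V} {v : V} (hv : v ∈ pi G S) : v ∉ S :=
  fun h => G.irrefl (hv v h)

lemma clique_insert {G : SimpleGraph V} {γ : Finset V} {v : V}
    (hγ : G.IsClique (γ : Set V)) (hv : v ∈ pi G γ) :
    G.IsClique ((insert v γ : Finset V) : Set V) := by
  rw [Finset.coe_insert, SimpleGraph.isClique_insert]
  exact ⟨hγ, fun b hb _ => (hv b hb).symm⟩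

lemma Hchar {G : SimpleGraph V} {d : ℕ} {α : Finset V} (hα : IsFace G d α) :
    Hset G d α = (fun v => insert v α) '' (pi G α) := by
  ext β
  constructor
  · rintro ⟨⟨hc, hcl⟩, hsub⟩
    have hcd : (β \ α).card = 1 := by
      rw [card_sdiff_of_subset hsub, hc, hα.1]; omega
    obtain ⟨v, hv⟩ := Finset.card_eq_one.mp hcd
    have hv' : v ∈ β ∧ v ∉ α := by
      have : v ∈ β \ α := hv ▸ Finset.mem_singleton_self v
      exact Finset.mem_sdiff.mp this
    have hpi : v ∈ pi G α := by
      intro x hx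
      exact hcl (hsub hx) hv'.1 (fun h => hv'.2 (h ▸ hx))
    refine ⟨v, hpi, ?_⟩
    have h1 : insert v α ⊆ β := Finset.insert_subset hv'.1 hsub
    have h2 : β.card ≤ (insert v α).card := by
      rw [Finset.card_insert_of_notMem hv'.2, hc, hα.1]
    exact Finset.eq_of_subset_of_card_le h1 h2
  · rintro ⟨v, hv, rfl⟩
    have hvα : v ∉ α := pi_not_mem hv
    refine ⟨⟨?_, clique_insert hα.2 hv⟩, Finset.subset_insert _ _⟩
    rw [Finset.card_insert_of_notMem hvα, hα.1]

lemma inter_eq {α γ : Finset V} {v : V} (hγα : γ ⊆ α) (hvα : v ∉ α) :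
    insert v γ ∩ α = γ := by
  ext x
  simp only [Finset.mem_inter, Finset.mem_insert]
  constructor
  · rintro ⟨h1 | h1, h2⟩
    · exact absurd (h1 ▸ h2) hvα
    · exact h1
  · exact fun h => ⟨Or.inr h, hγα h⟩

lemma parl_iff {G : SimpleGraph V} {d : ℕ} {α α' : Finset V} (hα : IsFace G d α) :
    Parl G d α α' ↔ ∃ γ, γ ⊆ α ∧ γ.card = d ∧
      ∃ v, v ∈ pi G γ \ (pi G α ∪ (α : Set V)) ∧ α' = insert v γ := by
  constructor
  · rintro ⟨⟨⟨hc', hcl'⟩, hne, γ0, hγc, _, hγα, hγα'⟩, hnp⟩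
    set s := α ∩ α' with hs
    have hss : s ⊆ α' := Finset.inter_subset_right
    have hsne : s ≠ α' := by
      intro h
      have hsub : α' ⊆ α := h ▸ Finset.inter_subset_left
      exact hne (Finset.eq_of_subset_of_card_le hsub (by rw [hα.1, hc']))
    have hslt : s.card < d + 1 := hc' ▸ Finset.card_lt_card (Finset.ssubset_iff_subset_ne.mpr ⟨hss, hsne⟩)
    have hsge : d ≤ s.card := hγc ▸ Finset.card_le_card (Finset.subset_inter hγα hγα')
    have hscard : s.card = d := by omega
    have hcd : (α' \ s).card = 1 := by rw [card_sdiff_of_subset hss, hc', hscard]; omega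
    obtain ⟨v, hv⟩ := Finset.card_eq_one.mp hcd
    have hv' : v ∈ α' ∧ v ∉ s := by
      have : v ∈ α' \ s := hv ▸ Finset.mem_singleton_self v
      exact Finset.mem_sdiff.mp this
    have hvα : v ∉ α := fun h => hv'.2 (Finset.mem_inter.mpr ⟨h, hv'.1⟩)
    have hα'eq : α' = insert v s := by
      have h1 : insert v s ⊆ α' := Finset.insert_subset hv'.1 hss
      have h2 : α'.card ≤ (insert v s).card := by
        rw [Finset.card_insert_of_notMem hv'.2, hc', hscard]
      exact (Finset.eq_of_subset_of_card_le h1 h2).symm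
    have hpis : v ∈ pi G s := by
      intro x hx
      exact hcl' (hss hx) hv'.1 (fun h => hvα (h ▸ (Finset.mem_inter.mp hx).1))
    have hvnpi : v ∉ pi G α := by
      intro hpi
      exact hnp ⟨insert v α, ⟨by rw [Finset.card_insert_of_notMem hvα, hα.1],
        clique_insert hα.2 hpi⟩, Finset.subset_insert _ _,
        hα'eq ▸ Finset.insert_subset_insert v Finset.inter_subset_left⟩
    exact ⟨s, Finset.inter_subset_left, hscard, v, ⟨hpis, by simp [hvnpi, hvα]⟩, hα'eq⟩
  · rintro ⟨γ, hγα, hγc, v, hv, rfl⟩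
    obtain ⟨hpiγ, hvno⟩ := hv
    have hvα : v ∉ α := fun h => hvno (Or.inr h)
    have hvnpi : v ∉ pi G α := fun h => hvno (Or.inl h)
    have hvγ : v ∉ γ := fun h => hvα (hγα h)
    have hγcl : G.IsClique (γ : Set V) := hα.2.subset (Finset.coe_subset.mpr hγα)
    refine ⟨⟨⟨by rw [Finset.card_insert_of_notMem hvγ, hγc], clique_insert hγcl hpiγ⟩,
      fun h => hvα (h ▸ Finset.mem_insert_self v γ), γ, hγc, hγcl, hγα, Finset.subset_insert _ _⟩, ?_⟩
    rintro ⟨β, ⟨hbc, hbcl⟩, hαβ, hα'β⟩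
    apply hvnpi
    intro x hx
    exact hbcl (hαβ hx) (hα'β (Finset.mem_insert_self v γ)) (fun h => hvα (h ▸ hx))

end aux

theorem stmt12 (G : SimpleGraph V) (d : ℕ) (hd : 1 ≤ d) (α : Finset V)
    (hα : IsFace G d α) :
    FRC G d α = ((pi G α).ncard : ℤ) + (d + 1) -
      ∑ γ ∈ α.powersetCard d, ((pi G γ \ (pi G α ∪ (α : Set V))).ncard : ℤ) := by
  classical
  have hH : (Hset G d α).ncard = (pi G α).ncard := by
    rw [Hchar hα]
    apply Set.ncard_image_of_injOn
    intro v hv w hw h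
    have hv' := pi_not_mem hv
    simp only at h
    have hmem : v ∈ insert w α := h ▸ Finset.mem_insert_self v α
    rcases Finset.mem_insert.mp hmem with h1 | h1
    · exact h1
    · exact absurd h1 hv'
  have hfin : ∀ γ : Finset V, (pi G γ \ (pi G α ∪ (α : Set V))).Finite :=
    fun γ => Set.toFinite _
  set F : Finset V → Finset (Finset V) :=
    fun γ => ((hfin γ).toFinset).image (fun v => insert v γ) with hF
  have hPset : Pset G d α = ↑((α.powersetCard d).biUnion F) := by
    ext α'
    simp only [Pset, Set.mem_setOf_eq, Finset.mem_coe, Finset.mem_biUnion,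
      Finset.mem_powersetCard, hF, Finset.mem_image, Set.Finite.mem_toFinset,
      parl_iff hα]
    constructor
    · rintro ⟨γ, h1, h2, v, h3, h4⟩; exact ⟨γ, ⟨h1, h2⟩, v, h3, h4.symm⟩
    · rintro ⟨γ, ⟨h1, h2⟩, v, h3, h4⟩; exact ⟨γ, h1, h2, v, h3, h4.symm⟩
  have hdisj : ∀ γ ∈ α.powersetCard d, ∀ γ' ∈ α.powersetCard d, γ ≠ γ' →
      Disjoint (F γ) (F γ') := by
    intro γ hγ γ' hγ' hne
    rw [Finset.mem_powersetCard] at hγ hγ'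
    rw [Finset.disjoint_left]
    rintro β hβ hβ'
    simp only [hF, Finset.mem_image, Set.Finite.mem_toFinset] at hβ hβ'
    obtain ⟨v, hv, rfl⟩ := hβ
    obtain ⟨w, hw, hw'⟩ := hβ'
    have h1 : insert v γ ∩ α = γ :=
      inter_eq hγ.1 (fun h => hv.2 (Set.mem_union_right _ (Finset.mem_coe.mpr h)))
    have h2 : insert w γ' ∩ α = γ' :=
      inter_eq hγ'.1 (fun h => hw.2 (Set.mem_union_right _ (Finset.mem_coe.mpr h)))
    exact hne (by rw [← h1, ← h2, hw'])
  have hP : (Pset G d α).ncard =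
      ∑ γ ∈ α.powersetCard d, (pi G γ \ (pi G α ∪ (α : Set V))).ncard := by
    rw [hPset, Set.ncard_coe_finset, Finset.card_biUnion hdisj]
    apply Finset.sum_congr rfl
    intro γ hγ
    rw [Finset.mem_powersetCard] at hγ
    have hinj : Set.InjOn (fun v => insert v γ) ((hfin γ).toFinset : Set V) := by
      intro v hv w hw h
      simp only [Finset.coe_mem, Set.Finite.mem_toFinset, Finset.mem_coe] at hv hw
      have hvγ : v ∉ γ := fun hm =>
        hv.2 (Set.mem_union_right _ (Finset.mem_coe.mpr (hγ.1 hm)))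
      simp only at h
      have hmem : v ∈ insert w γ := h ▸ Finset.mem_insert_self v γ
      rcases Finset.mem_insert.mp hmem with h1 | h1
      · exact h1
      · exact absurd h1 hvγ
    rw [hF]
    rw [Finset.card_image_of_injOn hinj, Set.ncard_eq_toFinset_card _ (hfin γ)]
  rw [FRC, hH, hP]
  push_cast
  ring
end

section
/- Let α be a d-face (d ≥ 1) of the clique complex of a graph G. The Forman-Ricci curvature F_d(α) = |H_α| + (d+1) − |P_α| satisfies F_d(α) = (d+2)|π_α| + (d+1) − |N_α|, where N_α is the set of neighbouring d-faces of α. -/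
open Finset

variable {V : Type*} [Fintype V] [DecidableEq V]

theorem stmt13 (G : SimpleGraph V) (d : ℕ) (hd : 1 ≤ d) (α : Finset V)
    (hα : IsFace G d α) :
    FRC G d α = (d + 2) * ((pi G α).ncard : ℤ) + (d + 1) - ((Nset G d α).ncard : ℤ) := by

  classical
  obtain ⟨hcard, hclique⟩ := hα
  have hpi_not : ∀ v ∈ pi G α, v ∉ α := by
    intro v hv hvα
    exact G.irrefl (hv v hvα)
  -- H = image of pi under v ↦ insert v α
  have hH : Hset G d α = (fun v => insert v α) '' (pi G α) := by
    ext β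
    constructor
    · rintro ⟨⟨hbc, hbcl⟩, hsub⟩
      have h1 : (β \ α).card = 1 := by
        rw [card_sdiff_of_subset hsub, hbc, hcard]; omega
      obtain ⟨v, hv⟩ := card_eq_one.mp h1
      have hvm := hv ▸ mem_singleton_self v
      have hvβ : v ∈ β := (mem_sdiff.mp hvm).1
      have hvα : v ∉ α := (mem_sdiff.mp hvm).2
      have hβ : insert v α = β := by
        apply Finset.eq_of_subset_of_card_le
        · exact insert_subset hvβ hsub
        · rw [hbc, card_insert_of_notMem hvα, hcard]
      refine ⟨v, fun x hx => ?_, hβ⟩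
      exact hbcl (hsub hx) hvβ (fun h => hvα (h ▸ hx))
    · rintro ⟨v, hv, rfl⟩
      have hvα : v ∉ α := hpi_not v hv
      refine ⟨⟨?_, ?_⟩, subset_insert v α⟩
      · rw [card_insert_of_notMem hvα, hcard]
      · rw [coe_insert]
        exact hclique.insert (fun b hb _ => (hv b hb).symm)
  -- T = image of pi ×ˢ α under (v, x) ↦ insert v (α.erase x)
  have hT : Tset G d α =
      (fun p : V × V => insert p.1 (α.erase p.2)) '' ((pi G α) ×ˢ (α : Set V)) := by
    ext α'
    constructor
    · rintro ⟨⟨⟨hc', hcl'⟩, hne, -⟩, β, ⟨hbc, hbcl⟩, hαβ, hα'β⟩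
      -- find v ∈ α' \ α
      have hsd : (α' \ α).Nonempty := by
        rw [sdiff_nonempty]
        intro hss
        exact hne (Finset.eq_of_subset_of_card_le hss (by rw [hcard, hc']))
      obtain ⟨v, hvm⟩ := hsd
      have hvα' : v ∈ α' := (mem_sdiff.mp hvm).1
      have hvα : v ∉ α := (mem_sdiff.mp hvm).2
      have hvβ : v ∈ β := hα'β hvα'
      have hβ : insert v α = β := by
        apply Finset.eq_of_subset_of_card_le
        · exact insert_subset hvβ hαβ
        · rw [hbc, card_insert_of_notMem hvα, hcard]
      have hvpi : v ∈ pi G α := fun x hx =>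
        hbcl (hαβ hx) hvβ (fun h => hvα (h ▸ hx))
      -- α' ⊆ insert v α, so α \ α' is a singleton
      have hα'i : α' ⊆ insert v α := hβ ▸ hα'β
      have hcap : (α' ∩ α).card = d := by
        have : α' = insert v (α' ∩ α) := by
          ext y
          simp only [mem_insert, mem_inter]
          constructor
          · intro hy
            rcases mem_insert.mp (hα'i hy) with h | h
            · exact Or.inl h
            · exact Or.inr ⟨hy, h⟩
          · rintro (rfl | ⟨h, -⟩)
            · exact hvα'
            · exact h
        have hvni : v ∉ α' ∩ α := fun h => hvα (mem_inter.mp h).2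
        have := congrArg Finset.card this
        rw [hc', card_insert_of_notMem hvni] at this
        omega
      have hsd2 : (α \ α').card = 1 := by
        have := card_sdiff_of_subset (inter_subset_right (s₁ := α') (s₂ := α))
        rw [hcap, hcard] at this
        rw [show α \ α' = α \ (α' ∩ α) by
          ext y; simp only [mem_sdiff, mem_inter]; tauto]
        omega
      obtain ⟨x, hx⟩ := card_eq_one.mp hsd2
      have hxm := hx ▸ mem_singleton_self x
      have hxα : x ∈ α := (mem_sdiff.mp hxm).1
      have hxα' : x ∉ α' := (mem_sdiff.mp hxm).2
      refine ⟨(v, x), ⟨hvpi, hxα⟩, ?_⟩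
      -- show insert v (α.erase x) = α'
      apply Finset.eq_of_subset_of_card_le
      · intro y hy
        rcases mem_insert.mp hy with rfl | hy'
        · exact hvα'
        · have hyα : y ∈ α := mem_of_mem_erase hy'
          have hyx : y ≠ x := ne_of_mem_erase hy'
          by_contra hyα'
          have : y ∈ α \ α' := mem_sdiff.mpr ⟨hyα, hyα'⟩
          rw [hx] at this
          exact hyx (mem_singleton.mp this)
      · have hvne : v ∉ α.erase x := fun h => hvα (mem_of_mem_erase h)
        rw [hc', card_insert_of_notMem hvne, card_erase_of_mem hxα, hcard]; omega
    · rintro ⟨⟨v, x⟩, ⟨hv, hx⟩, rfl⟩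
      simp only [Set.mem_prod, Finset.mem_coe] at hx hv
      have hvα : v ∉ α := hpi_not v hv
      have hvne : v ∉ α.erase x := fun h => hvα (mem_of_mem_erase h)
      have hc' : (insert v (α.erase x)).card = d + 1 := by
        rw [card_insert_of_notMem hvne, card_erase_of_mem hx, hcard]; omega
      have hins : (insert v α).card = d + 2 := by
        rw [card_insert_of_notMem hvα, hcard]
      have hinscl : G.IsClique (↑(insert v α) : Set V) := by
        rw [coe_insert]
        exact hclique.insert (fun b hb _ => (hv b hb).symm)
      have hsub' : insert v (α.erase x) ⊆ insert v α :=
        insert_subset_insert v (erase_subset x α)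
      refine ⟨⟨⟨hc', hinscl.subset ?_⟩, ?_, α.erase x, ?_, ?_, erase_subset x α,
        subset_insert v _⟩, insert v α, ⟨hins, hinscl⟩, subset_insert v α, hsub'⟩
      · exact_mod_cast hsub'
      · intro h
        exact hvα (h ▸ mem_insert_self v _)
      · rw [card_erase_of_mem hx, hcard]; omega
      · exact hclique.subset (by exact_mod_cast erase_subset x α)
  -- cardinalities
  have hHcard : (Hset G d α).ncard = (pi G α).ncard := by
    rw [hH]
    apply Set.ncard_image_of_injOn
    intro v hv v' hv' h
    simp only at h
    have : v ∈ insert v' α := h ▸ mem_insert_self v α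
    rcases mem_insert.mp this with h' | h'
    · exact h'
    · exact absurd h' (hpi_not v hv)
  have hTcard : (Tset G d α).ncard = (pi G α).ncard * (d + 1) := by
    rw [hT]
    rw [Set.ncard_image_of_injOn]
    · rw [show (pi G α ×ˢ (α : Set V)).ncard = (pi G α).ncard * ((α : Set V)).ncard from ?_]
      · rw [Set.ncard_coe_finset, hcard]
      · rw [Set.ncard_eq_toFinset_card', Set.ncard_eq_toFinset_card',
          Set.ncard_eq_toFinset_card', Set.toFinset_prod, Finset.card_product]
    · rintro ⟨v, x⟩ ⟨hv, hx⟩ ⟨v', x'⟩ ⟨hv', hx'⟩ h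
      simp only [Finset.mem_coe] at hx hx'
      simp only at h
      have hvα : v ∉ α := hpi_not v hv
      have hv'α : v' ∉ α := hpi_not v' hv'
      have hvv : v = v' := by
        have : v ∈ insert v' (α.erase x') := h ▸ mem_insert_self v _
        rcases mem_insert.mp this with h' | h'
        · exact h'
        · exact absurd (mem_of_mem_erase h') hvα
      subst hvv
      have hxx : α.erase x = α.erase x' := by
        have hvne : v ∉ α.erase x := fun hh => hvα (mem_of_mem_erase hh)
        have hvne' : v ∉ α.erase x' := fun hh => hvα (mem_of_mem_erase hh)
        have := congrArg (Finset.erase · v) h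
        simpa [Finset.erase_insert hvne, Finset.erase_insert hvne'] using this
      have : x = x' := by
        by_contra hne
        have : x ∈ α.erase x' := mem_erase.mpr ⟨hne, hx⟩
        rw [← hxx] at this
        exact (mem_erase.mp this).1 rfl
      simp [this]
  -- N = P ∪ T, disjoint
  have hNPT : Nset G d α = Pset G d α ∪ Tset G d α := by
    ext α'
    simp only [Nset, Pset, Tset, Parl, Transv, Set.mem_setOf_eq, Set.mem_union]
    tauto
  have hNcard : (Nset G d α).ncard = (Pset G d α).ncard + (Tset G d α).ncard := by
    rw [hNPT]
    apply Set.ncard_union_eq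
    · rw [Set.disjoint_left]
      rintro a ⟨-, hnb⟩ ⟨-, hb⟩
      exact hnb hb
    · exact Set.toFinite _
    · exact Set.toFinite _
  rw [FRC, hHcard, hNcard, hTcard]
  push_cast
  ring
end

section
/- Let α be a d-face (d ≥ 1) of the clique complex of a graph G. Then F_d(α) = |T_α|/(d+1) + (d+1) − |P_α|, where T_α and P_α are the transverse and parallel neighbours of α respectively; in particular |T_α| is divisible by d+1. -/
/-!
A transverse neighbour `α'` of `α` lies in a `(d+1)`-face `β ⊇ α`, and then `α' = β \ {x}` for
the vertex `x ∈ α` missing from `α'`; conversely `β \ {x}` is a transverse neighbour for every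
`x ∈ α`. Since `β = α ∪ (β \ {x})`, the pair `(β, x)` is recovered from `β \ {x}`, so
`(β, x) ↦ β \ {x}` is a bijection `H_α × α → T_α` and `|T_α| = (d + 1) |H_α|`.
-/

open Finset

variable {V : Type*} [Fintype V] [DecidableEq V]

section

omit [Fintype V]

lemma Finset.union_erase_eq_of_subset {s t : Finset V} (hst : s ⊆ t) {x : V} (hx : x ∈ s) :
    s ∪ t.erase x = t := by
  rw [union_erase_of_mem hx, union_eq_right.mpr hst]

variable {G : SimpleGraph V} {d : ℕ} {α β : Finset V}

lemma IsFace.erase (hβ : IsFace G (d + 1) β) {x : V} (hx : x ∈ β) : IsFace G d (β.erase x) :=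
  ⟨by rw [card_erase_of_mem hx, hβ.1, Nat.add_sub_cancel],
    hβ.2.subset (coe_subset.mpr (erase_subset x β))⟩

lemma transv_erase (hα : IsFace G d α) (hβ : β ∈ Hset G d α) {x : V} (hx : x ∈ α) :
    Transv G d α (β.erase x) := by
  obtain ⟨hβface, hαβ⟩ := hβ
  have hne : β.erase x ≠ α := fun h => notMem_erase x β (h ▸ hx)
  have hγ : (α.erase x).card = d := by rw [card_erase_of_mem hx, hα.1, Nat.add_sub_cancel]
  exact ⟨⟨hβface.erase (hαβ hx), hne, α.erase x, hγ,
      hα.2.subset (coe_subset.mpr (erase_subset x α)), erase_subset x α, erase_subset_erase x hαβ⟩,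
    β, hβface, hαβ, erase_subset x β⟩

lemma exists_erase_eq_of_transv (hα : IsFace G d α) {α' : Finset V} (h : Transv G d α α') :
    ∃ β ∈ Hset G d α, ∃ x ∈ α, β.erase x = α' := by
  obtain ⟨⟨hα', hne, -⟩, β, hβ, hαβ, hα'β⟩ := h
  obtain ⟨x, hxα', rfl⟩ : ∃ x ∉ α', insert x α' = β :=
    exists_eq_insert_iff.mpr ⟨hα'β, by rw [hα'.1, hβ.1]⟩
  refine ⟨_, ⟨hβ, hαβ⟩, x, ?_, erase_insert hxα'⟩
  by_contra hxα
  have hαα' : α ⊆ α' := erase_insert hxα' ▸ subset_erase.mpr ⟨hαβ, hxα⟩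
  exact hne (eq_of_subset_of_card_le hαα' (by rw [hα.1, hα'.1])).symm

lemma injOn_erase :
    Set.InjOn (fun p : Finset V × V => p.1.erase p.2) (Hset G d α ×ˢ (α : Set V)) := by
  rintro ⟨β, x⟩ ⟨⟨-, hαβ⟩, hx⟩ ⟨β', x'⟩ ⟨⟨-, hαβ'⟩, hx'⟩ (h : β.erase x = β'.erase x')
  dsimp only at hαβ hαβ' hx hx'
  have hβ : β = β' := by
    rw [← union_erase_eq_of_subset hαβ hx, ← union_erase_eq_of_subset hαβ' hx', h]
  subst hβ
  exact Prod.ext rfl (erase_injOn β (hαβ hx) (hαβ hx') h)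

lemma tset_eq_image_erase (hα : IsFace G d α) :
    Tset G d α = (fun p : Finset V × V => p.1.erase p.2) '' (Hset G d α ×ˢ (α : Set V)) := by
  ext α'
  constructor
  · intro h
    obtain ⟨β, hβ, x, hx, rfl⟩ := exists_erase_eq_of_transv hα h
    exact ⟨(β, x), ⟨hβ, hx⟩, rfl⟩
  · rintro ⟨⟨β, x⟩, ⟨hβ, hx⟩, rfl⟩
    exact transv_erase hα hβ hx

lemma ncard_tset (hα : IsFace G d α) : (Tset G d α).ncard = (Hset G d α).ncard * (d + 1) := by
  rw [tset_eq_image_erase hα, injOn_erase.ncard_image, Set.ncard_prod,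
    Set.ncard_coe_finset, hα.1]

end

theorem stmt15_general (G : SimpleGraph V) (d : ℕ) (α : Finset V)
    (hα : IsFace G d α) :
    (d + 1) ∣ (Tset G d α).ncard ∧
    FRC G d α = ((Tset G d α).ncard : ℤ) / (d + 1) + (d + 1) - ((Pset G d α).ncard : ℤ) := by
  have hT := ncard_tset hα
  have hH : ((Tset G d α).ncard : ℤ) / (d + 1) = (Hset G d α).ncard := by
    rw [hT, Nat.cast_mul, Nat.cast_succ, Int.mul_ediv_cancel _ (by positivity)]
  exact ⟨hT ▸ dvd_mul_left _ _, by rw [hH, FRC]⟩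

theorem stmt15 (G : SimpleGraph V) (d : ℕ) (hd : 1 ≤ d) (α : Finset V)
    (hα : IsFace G d α) :
    (d + 1) ∣ (Tset G d α).ncard ∧
    FRC G d α = ((Tset G d α).ncard : ℤ) / (d + 1) + (d + 1) - ((Pset G d α).ncard : ℤ) :=
  stmt15_general G d α hα
end
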